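/- Let G be an r-regular graph on n vertices, H any graph on N vertices, and let z be an eigenvector of A(G) for eigenvalue μ with z orthogonal to the all-ones vector (i.e., μ ≠ r eigenspace component). Then for every standard basis vector e_j ∈ ℝ^N, the vector (0; z ⊗ e_j) is an eigenvector of the adjacency matrix of H ∘ G with eigenvalue μ. Hence each eigenvalue μ_i (i = 1,…,n−1) of G contributes with multiplicity N to the spectrum of H ∘ G. -/

import Mathlib

open SimpleGraph Filter Matrix

/-- The corona product `H ∘ G`: one copy of `H` and, for each vertex `a` of `H`,
a copy of `G` whose vertices are all joined to `a`. -/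
def corona {α β : Type*} (H : SimpleGraph α) (G : SimpleGraph β) :
    SimpleGraph (α ⊕ α × β) where
  Adj x y :=
    match x, y with
    | Sum.inl a, Sum.inl a' => H.Adj a a'
    | Sum.inl a, Sum.inr p => a = p.1
    | Sum.inr p, Sum.inl a => a = p.1
    | Sum.inr p, Sum.inr q => p.1 = q.1 ∧ G.Adj p.2 q.2
  symm := ⟨by
    rintro (a | p) (a' | q) h
    · exact H.adj_symm h
    · exact h
    · exact h
    · exact ⟨h.1.symm, G.adj_symm h.2⟩⟩
  loopless := ⟨by
    rintro (a | p) h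
    · exact H.irrefl h
    · exact G.irrefl h.2⟩

instance coronaAdjDecidable {α β : Type*} [DecidableEq α]
    (H : SimpleGraph α) (G : SimpleGraph β)
    [DecidableRel H.Adj] [DecidableRel G.Adj] : DecidableRel (corona H G).Adj := fun x y =>
  match x, y with
  | Sum.inl a, Sum.inl a' => inferInstanceAs (Decidable (H.Adj a a'))
  | Sum.inl a, Sum.inr p => inferInstanceAs (Decidable (a = p.1))
  | Sum.inr p, Sum.inl a => inferInstanceAs (Decidable (a = p.1))
  | Sum.inr p, Sum.inr q => inferInstanceAs (Decidable (p.1 = q.1 ∧ G.Adj p.2 q.2))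

/-- Vertex type of the `m`-th iterated corona graph generated by a seed on `V`. -/
def coronaVert (V : Type*) : ℕ → Type _
  | 0 => V
  | m + 1 => coronaVert V m ⊕ coronaVert V m × V

/-- The iterated Corona graphs: `G^(0) = G`, `G^(m+1) = G^(m) ∘ G`. -/
def coronaIter {V : Type*} (G : SimpleGraph V) : (m : ℕ) → SimpleGraph (coronaVert V m)
  | 0 => G
  | m + 1 => corona (coronaIter G m) G

instance coronaVertFintype {V : Type*} [Fintype V] : (m : ℕ) → Fintype (coronaVert V m)
  | 0 => inferInstanceAs (Fintype V)
  | m + 1 =>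
    have := coronaVertFintype (V := V) m
    inferInstanceAs (Fintype (coronaVert V m ⊕ coronaVert V m × V))

instance coronaVertDecEq {V : Type*} [DecidableEq V] : (m : ℕ) → DecidableEq (coronaVert V m)
  | 0 => inferInstanceAs (DecidableEq V)
  | m + 1 =>
    have := coronaVertDecEq (V := V) m
    inferInstanceAs (DecidableEq (coronaVert V m ⊕ coronaVert V m × V))

instance coronaIterAdjDecidable {V : Type*} [DecidableEq V] (G : SimpleGraph V)
    [DecidableRel G.Adj] : (m : ℕ) → DecidableRel (coronaIter G m).Adj
  | 0 => inferInstanceAs (DecidableRel G.Adj)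
  | m + 1 =>
    have := coronaIterAdjDecidable G m
    inferInstanceAs (DecidableRel (corona (coronaIter G m) G).Adj)

/-- for `G` `r`-regular and `z` an eigenvector of `A(G)` for `μ` orthogonal
to the all-ones vector, each vector `(0; z ⊗ e_j)` (`j ∈ V(H)`) is an eigenvector of
`A(H ∘ G)` with eigenvalue `μ`, and these vectors are linearly independent, so `μ`
contributes with multiplicity `|V(H)|`. -/
theorem corona_eigenvalue_copies {α β : Type*} [Fintype α] [Fintype β]
    [DecidableEq α] [DecidableEq β] (H : SimpleGraph α) (G : SimpleGraph β)
    [DecidableRel H.Adj] [DecidableRel G.Adj] (r : ℕ) (hreg : G.IsRegularOfDegree r)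
    (μ : ℝ) (z : β → ℝ) (hz : z ≠ 0) (hEig : (G.adjMatrix ℝ) *ᵥ z = μ • z)
    (horth : ∑ b, z b = 0) :
    (∀ j : α,
      ((corona H G).adjMatrix ℝ) *ᵥ
          (Sum.elim (0 : α → ℝ) fun p : _ × β => if p.1 = j then z p.2 else 0) =
        μ • (Sum.elim (0 : α → ℝ) fun p : _ × β => if p.1 = j then z p.2 else 0)) ∧
    LinearIndependent ℝ
      (fun j : α => Sum.elim (0 : α → ℝ) fun p : _ × β => if p.1 = j then z p.2 else 0) := by
  constructor
  · intro j
    funext x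
    cases x with
    | inl a =>
      simp only [mulVec, dotProduct, Pi.smul_apply, Sum.elim_inl, Pi.zero_apply, smul_zero,
        Fintype.sum_sum_type, adjMatrix_apply, corona, Sum.elim_inr]
      rw [Fintype.sum_prod_type]
      simp only [adjMatrix, of_apply, mul_ite, mul_one, mul_zero, ite_and]
      by_cases haj : a = j
      · subst haj
        simp [Finset.sum_ite_eq, horth]
      · simp [Finset.sum_ite_eq', haj]
    | inr q =>
      obtain ⟨a, b⟩ := q
      simp only [mulVec, dotProduct, Pi.smul_apply, Sum.elim_inl, Pi.zero_apply,
        Fintype.sum_sum_type, adjMatrix_apply, corona, Sum.elim_inr]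
      rw [Fintype.sum_prod_type]
      simp only [adjMatrix, of_apply, mul_ite, mul_one, mul_zero, ite_and]
      by_cases haj : a = j
      · subst haj
        have := congrFun hEig b
        simp only [mulVec, dotProduct, adjMatrix_apply, Pi.smul_apply, smul_eq_mul] at this
        simp only [Finset.sum_ite_eq, Finset.mem_univ, if_true]
        simpa [mul_ite, mul_one, mul_zero] using this
      · simp [Finset.sum_ite_eq, haj]
  · rw [Fintype.linearIndependent_iff]
    intro c hc j
    obtain ⟨b0, hb0⟩ := Function.ne_iff.mp hz
    have := congrFun hc (Sum.inr (j, b0))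
    simp only [Finset.sum_apply, Pi.smul_apply, Sum.elim_inr, smul_eq_mul, Pi.zero_apply] at this
    rw [Finset.sum_eq_single j] at this
    · simp at this
      rcases this with h | h
      · exact h
      · exact absurd h hb0
    · intro i _ hij
      simp [Ne.symm hij]
    · simp
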